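/- Updates commute forward past non-update operations of the same thread under TSO: if γ →(t,u) γ'' →(t,op) γ' where op is any thread operation that is not an atomic read-write, then there exists γ₁ with γ →(t,op) γ₁ →(t,u) γ'. Hence every context-bounded run can be transformed into a run reaching the same final configuration in which all memory-update steps occur at the end of their context. -/

import Mathlib

/-- A TSO configuration: thread states, register valuation, per-thread FIFO
store buffers (newest write at the head, oldest at the tail), shared memory. -/
structure TSOConf (T Q X R : Type*) where
  st : T → Q
  rval : R → ℕ
  buf : T → List (X × ℕ)
  mem : X → ℕ

/-- Thread operations other than atomic read-writes. -/
inductive TSOOp (X R : Type*) where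
  | assign (r₁ r₂ : R)                         -- r₁ := r₂
  | havoc (r : R)                              -- r := ⊛
  | guard (rel : ℕ → ℕ → Prop) (r₁ r₂ : R)     -- rel(r₁, r₂)
  | read (x : X) (r : R)                       -- r := x
  | write (x : X) (r : R)                      -- x := r

/-- The value returned by a read of `x` by thread `t`: the newest pending
buffered write on `x` if there is one, and the memory value otherwise. -/
def readVal {T Q X R : Type*} [DecidableEq X] (γ : TSOConf T Q X R) (t : T) (x : X) : ℕ :=
  match (γ.buf t).find? (fun p => p.1 = x) with
  | some p => p.2
  | none => γ.mem x

/-- Operational semantics of non-update, non-arw steps of thread `t`,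
moving its control state to `q'`. -/
inductive OpStep {T Q X R : Type*} [DecidableEq T] [DecidableEq X] [DecidableEq R]
    (t : T) (q' : Q) : TSOOp X R → TSOConf T Q X R → TSOConf T Q X R → Prop
  | assign (r₁ r₂ : R) (γ : TSOConf T Q X R) :
      OpStep t q' (.assign r₁ r₂) γ
        { γ with st := Function.update γ.st t q',
                 rval := Function.update γ.rval r₁ (γ.rval r₂) }
  | havoc (r : R) (d : ℕ) (γ : TSOConf T Q X R) :
      OpStep t q' (.havoc r) γ
        { γ with st := Function.update γ.st t q',
                 rval := Function.update γ.rval r d }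
  | guard (rel : ℕ → ℕ → Prop) (r₁ r₂ : R) (γ : TSOConf T Q X R)
      (h : rel (γ.rval r₁) (γ.rval r₂)) :
      OpStep t q' (.guard rel r₁ r₂) γ { γ with st := Function.update γ.st t q' }
  | read (x : X) (r : R) (γ : TSOConf T Q X R) :
      OpStep t q' (.read x r) γ
        { γ with st := Function.update γ.st t q',
                 rval := Function.update γ.rval r (readVal γ t x) }
  | write (x : X) (r : R) (γ : TSOConf T Q X R) :
      OpStep t q' (.write x r) γ
        { γ with st := Function.update γ.st t q',
                 buf := Function.update γ.buf t ((x, γ.rval r) :: γ.buf t) }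

/-- A memory update step of thread `t`: the oldest buffered write `(x, d)` of `t`
is removed from its buffer and written to the shared memory. -/
def UpdStep {T Q X R : Type*} [DecidableEq T] [DecidableEq X]
    (t : T) (γ γ' : TSOConf T Q X R) : Prop :=
  ∃ (buf' : List (X × ℕ)) (x : X) (d : ℕ),
    γ.buf t = buf' ++ [(x, d)] ∧
    γ' = { γ with buf := Function.update γ.buf t buf',
                  mem := Function.update γ.mem x d }

/-! An update step only moves the oldest buffer entry of the thread into memory, and no
non-update operation of that thread can tell the difference: a read returns the same value
(the committed write is either shadowed by a newer buffered write on the same variable or now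
sits in memory), and a write is prepended at the other end of the buffer. -/

theorem UpdStep.readVal_eq {T Q X R : Type*} [DecidableEq T] [DecidableEq X]
    {t : T} {γ γ' : TSOConf T Q X R} (h : UpdStep t γ γ') (y : X) :
    readVal γ' t y = readVal γ t y := by
  obtain ⟨buf', x, d, hb, rfl⟩ := h
  unfold readVal
  simp only [Function.update_self, hb, List.find?_append]
  cases hfind : buf'.find? (fun p => p.1 = y) with
  | some p => rfl
  | none =>
    rcases eq_or_ne x y with rfl | hxy
    · simp
    · simp [hxy, Function.update_of_ne (Ne.symm hxy)]

/-- Updates commute forward past non-arw operations of the same thread. -/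
theorem stmt_11 {T Q X R : Type*} [DecidableEq T] [DecidableEq X] [DecidableEq R]
    (t : T) (q' : Q) (op : TSOOp X R) (γ γ'' γ' : TSOConf T Q X R)
    (hupd : UpdStep t γ γ'') (hop : OpStep t q' op γ'' γ') :
    ∃ γ₁ : TSOConf T Q X R, OpStep t q' op γ γ₁ ∧ UpdStep t γ₁ γ' := by
  obtain ⟨buf', x, d, hb, rfl⟩ := id hupd
  cases hop with
  | assign r₁ r₂ => exact ⟨_, .assign r₁ r₂ γ, buf', x, d, hb, rfl⟩
  | havoc r v => exact ⟨_, .havoc r v γ, buf', x, d, hb, rfl⟩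
  | guard rel r₁ r₂ _ hrel => exact ⟨_, .guard rel r₁ r₂ γ hrel, buf', x, d, hb, rfl⟩
  | read y r => exact ⟨_, .read y r γ, buf', x, d, hb, by rw [hupd.readVal_eq]⟩
  | write y r =>
    refine ⟨_, .write y r γ, (y, γ.rval r) :: buf', x, d, ?_, ?_⟩
    · simp [hb]
    · simp only [Function.update_idem, Function.update_self]
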